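/- arXiv:2603.26166 — 4 statements merged into one kernel-verified Lean document; each statement's English description precedes it below -/
import Mathlib

section
/- Let X be a non-negative, non-degenerate random variable with finite mean μ = E[X] > 0, let X₂ be an independent copy of X, and let λ ∈ [0,1]. Then the index I_λ admits the representation I_λ = 1 − (1/μ) ∫₀^∞ F̄_X(t⁻) F̄_{λX₂+(1−λ)μ}(t⁻) dt = (1/μ) ∫₀^∞ F_X(t⁻) F̄_{λX₂+(1−λ)μ}(t⁻) dt, where F̄(t⁻) = P(· ≥ t) denotes the left limit of the survival function at t. -/
/-!
With `Y = λX₂ + (1-λ)μ` the variable inside the absolute value is `X₁ - Y`, and `Y` also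
has mean `μ`. Since `|a - b| = a + b - 2 min(a, b)`, we get `2μ I_λ = 2μ - 2 E[min(X₁, Y)]`.
By the layer cake formula and the independence of `X₁` and `Y`,
`E[min(X₁, Y)] = ∫₀^∞ P(X₁ ≥ t) P(Y ≥ t) dt`, which is the first representation. The second
one follows from `F_X(t⁻) = 1 - F̄_X(t⁻)` and `∫₀^∞ P(Y ≥ t) dt = E[Y] = μ`.
-/

open MeasureTheory ProbabilityTheory Set

lemma abs_sub_eq_add_sub_two_min (a b : ℝ) : |a - b| = a + b - 2 * min a b := by
  rw [abs_sub_comm, ← max_sub_min_eq_abs, ← min_add_max a b]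
  ring

namespace ProbabilityTheory

variable {Ω : Type*} {mΩ : MeasurableSpace Ω} {P : Measure Ω}

lemma measurable_measureReal_le (P : Measure Ω) (U : Ω → ℝ) : Measurable fun t => P.real {ω | t ≤ U ω} :=
  (Antitone.measurable (f := fun t => P {ω | t ≤ U ω})
    fun _ _ hst => measure_mono fun _ h => hst.trans h).ennreal_toReal

lemma integrableOn_Ioi_measureReal_le {V : Ω → ℝ} (hV : Integrable V P) (hV0 : 0 ≤ᵐ[P] V) :
    IntegrableOn (fun t => P.real {ω | t ≤ V ω}) (Ioi 0) := by
  refine ⟨(measurable_measureReal_le P V).aestronglyMeasurable, ?_⟩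
  rw [hasFiniteIntegral_iff_ofReal (ae_of_all _ fun _ => measureReal_nonneg)]
  calc ∫⁻ t in Ioi 0, ENNReal.ofReal (P.real {ω | t ≤ V ω})
      ≤ ∫⁻ t in Ioi 0, P {ω | t ≤ V ω} := lintegral_mono fun _ => ENNReal.ofReal_toReal_le
    _ = ∫⁻ ω, ENNReal.ofReal (V ω) ∂P :=
      (lintegral_eq_lintegral_meas_le P hV0 hV.aemeasurable).symm
    _ < ⊤ := hV.lintegral_lt_top

lemma IndepFun.measure_le_min {U V : Ω → ℝ} (h : IndepFun U V P) (t : ℝ) :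
    P {ω | t ≤ min (U ω) (V ω)} = P {ω | t ≤ U ω} * P {ω | t ≤ V ω} := by
  have hset : {ω | t ≤ min (U ω) (V ω)} = U ⁻¹' Ici t ∩ V ⁻¹' Ici t := by
    ext ω
    simp
  rw [hset]
  exact h.measure_inter_preimage_eq_mul _ _ measurableSet_Ici measurableSet_Ici

lemma IndepFun.integral_min_eq_integral_measureReal_le_mul {U V : Ω → ℝ} (h : IndepFun U V P)
    (hU : Integrable U P) (hV : Integrable V P) (hU0 : 0 ≤ᵐ[P] U) (hV0 : 0 ≤ᵐ[P] V) :
    ∫ ω, min (U ω) (V ω) ∂P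
      = ∫ t in Ioi 0, P.real {ω | t ≤ U ω} * P.real {ω | t ≤ V ω} := by
  have hmin : Integrable (fun ω => min (U ω) (V ω)) P := hU.inf hV
  have hmin0 : 0 ≤ᵐ[P] fun ω => min (U ω) (V ω) := by
    filter_upwards [hU0, hV0] with ω hUω hVω
    exact le_min hUω hVω
  rw [hmin.integral_eq_integral_meas_le hmin0]
  simp only [measureReal_def, h.measure_le_min, ENNReal.toReal_mul]

lemma IndepFun.integral_abs_sub {U V : Ω → ℝ} (h : IndepFun U V P)
    (hU : Integrable U P) (hV : Integrable V P) (hU0 : 0 ≤ᵐ[P] U) (hV0 : 0 ≤ᵐ[P] V) :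
    ∫ ω, |U ω - V ω| ∂P
      = ∫ ω, U ω ∂P + ∫ ω, V ω ∂P
        - 2 * ∫ t in Ioi 0, P.real {ω | t ≤ U ω} * P.real {ω | t ≤ V ω} := by
  have hsum : Integrable (fun ω => U ω + V ω) P := hU.add hV
  have hmin : Integrable (fun ω => min (U ω) (V ω)) P := hU.inf hV
  simp_rw [abs_sub_eq_add_sub_two_min]
  rw [integral_sub hsum (hmin.const_mul 2), integral_add hU hV, integral_const_mul,
    h.integral_min_eq_integral_measureReal_le_mul hU hV hU0 hV0]

lemma integral_measureReal_lt_mul_measureReal_le [IsProbabilityMeasure P] {U V : Ω → ℝ}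
    (hU : AEMeasurable U P) (hV : Integrable V P) (hV0 : 0 ≤ᵐ[P] V) :
    ∫ t in Ioi 0, P.real {ω | U ω < t} * P.real {ω | t ≤ V ω}
      = ∫ ω, V ω ∂P - ∫ t in Ioi 0, P.real {ω | t ≤ U ω} * P.real {ω | t ≤ V ω} := by
  have hV_tail := integrableOn_Ioi_measureReal_le hV hV0
  have hUV_meas := (measurable_measureReal_le P U).mul (measurable_measureReal_le P V)
  have hUV_tail :
      IntegrableOn (fun t => P.real {ω | t ≤ U ω} * P.real {ω | t ≤ V ω}) (Ioi 0) :=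
    hV_tail.mono' hUV_meas.aestronglyMeasurable <| ae_of_all _ fun t => by
      rw [Real.norm_of_nonneg (by positivity)]
      exact mul_le_of_le_one_left measureReal_nonneg measureReal_le_one
  have hcompl : ∀ t, P.real {ω | U ω < t} = 1 - P.real {ω | t ≤ U ω} := fun t => by
    have hset : {ω | U ω < t} = (U ⁻¹' Ici t)ᶜ := by
      ext ω
      simp
    rw [hset, probReal_compl_eq_one_sub₀ (hU.nullMeasurableSet_preimage measurableSet_Ici)]
    rfl
  simp_rw [hcompl, sub_mul, one_mul]
  rw [integral_sub hV_tail hUV_tail, ← hV.integral_eq_integral_meas_le hV0]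

end ProbabilityTheory

theorem index_integral_representation_general
    {Ω : Type*} {mΩ : MeasurableSpace Ω} (P : Measure Ω) [IsProbabilityMeasure P]
    (X X₁ X₂ : Ω → ℝ)
    (hXnn : ∀ ω, 0 ≤ X ω)
    (hint : Integrable X P)
    (hid1 : IdentDistrib X₁ X P P) (hid2 : IdentDistrib X₂ X P P)
    (hindep : IndepFun X₁ X₂ P)
    (μ : ℝ) (hμ : μ = ∫ ω, X ω ∂P) (hμpos : 0 < μ)
    (lam : ℝ) (hlam : lam ∈ Icc (0 : ℝ) 1) :
    (1 / (2 * μ)) * (∫ ω, |(1 - lam) * (X₁ ω - μ) + lam * (X₁ ω - X₂ ω)| ∂P)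
      = 1 - (1 / μ) * ∫ t in Ioi (0 : ℝ),
          (P {ω | t ≤ X ω}).toReal * (P {ω | t ≤ lam * X₂ ω + (1 - lam) * μ}).toReal
    ∧ (1 / (2 * μ)) * (∫ ω, |(1 - lam) * (X₁ ω - μ) + lam * (X₁ ω - X₂ ω)| ∂P)
      = (1 / μ) * ∫ t in Ioi (0 : ℝ),
          (P {ω | X ω < t}).toReal * (P {ω | t ≤ lam * X₂ ω + (1 - lam) * μ}).toReal := by
  obtain ⟨hlam0, hlam1⟩ := hlam
  simp only [← measureReal_def]
  set Y : Ω → ℝ := fun ω => lam * X₂ ω + (1 - lam) * μ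
  have hYω : ∀ ω, lam * X₂ ω + (1 - lam) * μ = Y ω := fun _ => rfl
  simp only [hYω]
  have hX₂int : Integrable X₂ P := hid2.integrable_iff.2 hint
  have hX₁0 : 0 ≤ᵐ[P] X₁ := hid1.symm.ae_snd measurableSet_Ici (ae_of_all _ hXnn)
  have hY0 : 0 ≤ᵐ[P] Y := by
    filter_upwards [hid2.symm.ae_snd measurableSet_Ici (ae_of_all _ hXnn)] with ω hω
    exact add_nonneg (mul_nonneg hlam0 hω) (mul_nonneg (sub_nonneg.2 hlam1) hμpos.le)
  have hYint : Integrable Y P := (hX₂int.const_mul lam).add (integrable_const _)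
  have hYμ : ∫ ω, Y ω ∂P = μ := by
    rw [integral_add (hX₂int.const_mul lam) (integrable_const _), integral_const_mul,
      hid2.integral_eq, ← hμ, integral_const, probReal_univ, one_smul]
    ring
  have hindY : IndepFun X₁ Y P :=
    hindep.comp (ψ := fun x => lam * x + (1 - lam) * μ) measurable_id (by fun_prop)
  have htail : ∀ t, P.real {ω | t ≤ X₁ ω} = P.real {ω | t ≤ X ω} := fun t =>
    congrArg ENNReal.toReal (hid1.measure_mem_eq measurableSet_Ici)
  have hsub : ∀ ω, (1 - lam) * (X₁ ω - μ) + lam * (X₁ ω - X₂ ω) = X₁ ω - Y ω :=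
    fun ω => by ring
  have hfirst : (1 / (2 * μ)) * (∫ ω, |(1 - lam) * (X₁ ω - μ) + lam * (X₁ ω - X₂ ω)| ∂P)
      = 1 - (1 / μ) * ∫ t in Ioi 0, P.real {ω | t ≤ X ω} * P.real {ω | t ≤ Y ω} := by
    simp_rw [hsub, hindY.integral_abs_sub (hid1.integrable_iff.2 hint) hYint hX₁0 hY0, htail,
      hid1.integral_eq, ← hμ, hYμ]
    field_simp
    ring
  refine ⟨hfirst, ?_⟩
  rw [hfirst, integral_measureReal_lt_mul_measureReal_le hid1.aemeasurable_snd hYint hY0,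
    hYμ]
  field_simp

/-- Proposition 2.1. For a non-negative, non-degenerate random variable `X`
with finite mean `μ = E[X] > 0`, independent copies `X₁, X₂` of `X`, and `λ ∈ [0,1]`, the index
`I_λ = (1/(2μ)) E|(1-λ)(X₁-μ) + λ(X₁-X₂)|` satisfies
`I_λ = 1 - (1/μ) ∫₀^∞ F̄_X(t⁻) F̄_{λX₂+(1-λ)μ}(t⁻) dt
     = (1/μ) ∫₀^∞ F_X(t⁻) F̄_{λX₂+(1-λ)μ}(t⁻) dt`. -/
theorem index_integral_representation
    {Ω : Type*} {mΩ : MeasurableSpace Ω} (P : Measure Ω) [IsProbabilityMeasure P]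
    (X X₁ X₂ : Ω → ℝ)
    (hXm : Measurable X) (hX₁m : Measurable X₁) (hX₂m : Measurable X₂)
    (hXnn : ∀ ω, 0 ≤ X ω)
    (hint : Integrable X P)
    (hnondeg : ¬ ∃ c : ℝ, ∀ᵐ ω ∂P, X ω = c)
    (hid1 : IdentDistrib X₁ X P P) (hid2 : IdentDistrib X₂ X P P)
    (hindep : IndepFun X₁ X₂ P)
    (μ : ℝ) (hμ : μ = ∫ ω, X ω ∂P) (hμpos : 0 < μ)
    (lam : ℝ) (hlam : lam ∈ Icc (0 : ℝ) 1) :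
    (1 / (2 * μ)) * (∫ ω, |(1 - lam) * (X₁ ω - μ) + lam * (X₁ ω - X₂ ω)| ∂P)
      = 1 - (1 / μ) * ∫ t in Ioi (0 : ℝ),
          (P {ω | t ≤ X ω}).toReal * (P {ω | t ≤ lam * X₂ ω + (1 - lam) * μ}).toReal
    ∧ (1 / (2 * μ)) * (∫ ω, |(1 - lam) * (X₁ ω - μ) + lam * (X₁ ω - X₂ ω)| ∂P)
      = (1 / μ) * ∫ t in Ioi (0 : ℝ),
          (P {ω | X ω < t}).toReal * (P {ω | t ≤ lam * X₂ ω + (1 - lam) * μ}).toReal :=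
  index_integral_representation_general (mΩ := mΩ) P X X₁ X₂ hXnn hint hid1 hid2 hindep μ hμ hμpos
    lam hlam
end

section
/- Let X ~ Gamma(α, β) with shape α > 0 and rate β > 0, and let λ ∈ (0,1]. Then I_λ = (1−λ)^α α^{α−1} exp{−(1−λ)α} / Γ(α) + λ Γ(α,(1−λ)α)/Γ(α) − (1/α) ∫_{(1−λ)α}^∞ [Γ(α,t)/Γ(α)] · [Γ(α, (t−(1−λ)α)/λ)/Γ(α)] dt. -/
open MeasureTheory ProbabilityTheory Set

/-- Upper incomplete gamma function `Γ(s, x) = ∫_x^∞ t^{s-1} e^{-t} dt`. -/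
noncomputable def uGamma (s x : ℝ) : ℝ := ∫ t in Ioi x, t ^ (s - 1) * Real.exp (-t)

/-!
With `c = (1 - λ) μ` the variable `Z = (1 - λ)(X₁ - μ) + λ(X₁ - X₂) = X₁ - λ X₂ - c` is centred,
so `E|Z| = 2 E Z⁺`. The layer-cake identity `∫ (x - a)⁺ dν = ∫_a^∞ ν(t, ∞) dt` and Tonelli give
`E Z⁺ = ∫ P(X₁ > t) P(X₂ < (t - c)/λ) dt`; for the gamma law both factors are regularized
incomplete gamma functions of `β t`, and the substitution `u = β t` produces the integral of the
statement. The remaining term `∫_x^∞ Γ(α, t) dt = Γ(α + 1, x) - x Γ(α, x)` comes from the same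
layer-cake identity, and `Γ(α + 1, x) = α Γ(α, x) + x^α e^{-x}` from integration by parts.
-/

open Filter Topology
open scoped ENNReal

section LayerCake

variable {ν ν₁ ν₂ : Measure ℝ} [SFinite ν] [SFinite ν₁] [SFinite ν₂]

theorem lintegral_ofReal_sub_eq_setLIntegral_measure_Ioi (a : ℝ) :
    ∫⁻ x, ENNReal.ofReal (x - a) ∂ν = ∫⁻ t in Ioi a, ν (Ioi t) := by
  have hvol (x : ℝ) : ENNReal.ofReal (x - a) = ∫⁻ t in Ioi a, (Iio x).indicator 1 t := by
    rw [lintegral_indicator_one measurableSet_Iio, Measure.restrict_apply measurableSet_Iio,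
      Iio_inter_Ioi, Real.volume_Ioo]
  have hmeas : Measurable (Function.uncurry fun x t : ℝ => (Iio x).indicator (1 : ℝ → ℝ≥0∞) t) :=
    measurable_one.indicator (measurableSet_lt measurable_snd measurable_fst)
  simp_rw [hvol]
  rw [lintegral_lintegral_swap hmeas.aemeasurable]
  congr with t
  exact lintegral_indicator_one (measurableSet_Ioi (a := t))

theorem lintegral_prod_ofReal_sub_mul_sub {lam : ℝ} (hlam : 0 < lam) (c : ℝ) :
    ∫⁻ p, ENNReal.ofReal (p.1 - lam * p.2 - c) ∂(ν₁.prod ν₂)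
      = ∫⁻ t, ν₁ (Ioi t) * ν₂ (Iio ((t - c) / lam)) := by
  have hsurv : Measurable fun t => ν₁ (Ioi t) :=
    Antitone.measurable fun _ _ h => measure_mono (Ioi_subset_Ioi h)
  have hmeas : Measurable (Function.uncurry fun y t : ℝ =>
      ν₁ (Ioi t) * (Iio ((t - c) / lam)).indicator (1 : ℝ → ℝ≥0∞) y) :=
    (hsurv.comp measurable_snd).mul (measurable_one.indicator
      (measurableSet_lt measurable_fst ((measurable_snd.sub_const c).div_const lam)))
  calc ∫⁻ p, ENNReal.ofReal (p.1 - lam * p.2 - c) ∂(ν₁.prod ν₂)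
      = ∫⁻ y, (∫⁻ t in Ioi (lam * y + c), ν₁ (Ioi t)) ∂ν₂ := by
        rw [lintegral_prod_symm' _ (by fun_prop)]
        simp_rw [sub_sub, lintegral_ofReal_sub_eq_setLIntegral_measure_Ioi]
    _ = ∫⁻ y, (∫⁻ t, ν₁ (Ioi t) * (Iio ((t - c) / lam)).indicator 1 y) ∂ν₂ := by
        congr with y
        rw [← lintegral_indicator measurableSet_Ioi]
        congr with t
        simp only [indicator, mem_Ioi, mem_Iio, lt_div_iff₀ hlam, Pi.one_apply]
        split_ifs with h₁ h₂ h₂ <;> first | (exfalso; linarith) | simp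
    _ = ∫⁻ t, ν₁ (Ioi t) * ν₂ (Iio ((t - c) / lam)) := by
        rw [lintegral_lintegral_swap hmeas.aemeasurable]
        congr with t
        rw [lintegral_const_mul _ (measurable_one.indicator measurableSet_Iio),
          lintegral_indicator_one measurableSet_Iio]

end LayerCake

section Probability

variable {Ω : Type*} {mΩ : MeasurableSpace Ω} {P : Measure Ω}

theorem integral_abs_eq_two_mul_toReal_lintegral_ofReal {Z : Ω → ℝ} (hZ : Integrable Z P)
    (hZ₀ : ∫ ω, Z ω ∂P = 0) :
    ∫ ω, |Z ω| ∂P = 2 * (∫⁻ ω, ENNReal.ofReal (Z ω) ∂P).toReal := by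
  have habs (z : ℝ) : |z| = 2 * max z 0 - z := by
    rcases le_total z 0 with h | h
    · rw [abs_of_nonpos h, max_eq_right h]; ring
    · rw [abs_of_nonneg h, max_eq_left h]; ring
  have hpos : ∫ ω, max (Z ω) 0 ∂P = (∫⁻ ω, ENNReal.ofReal (Z ω) ∂P).toReal := by
    rw [integral_eq_lintegral_of_nonneg_ae (f := fun ω => max (Z ω) 0)
      (ae_of_all _ fun _ => le_max_right _ _) hZ.pos_part.aestronglyMeasurable]
    simp only [ENNReal.ofReal_max, ENNReal.ofReal_zero, max_zero]
  simp_rw [habs]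
  rw [integral_sub (hZ.pos_part.const_mul 2) hZ, integral_const_mul, hZ₀, hpos, sub_zero]

theorem integral_abs_index_eq_two_mul_toReal_lintegral_ofReal [IsProbabilityMeasure P]
    {X₁ X₂ : Ω → ℝ} (hX₁ : Integrable X₁ P) (hX₂ : Integrable X₂ P) {μ : ℝ}
    (hμ₁ : ∫ ω, X₁ ω ∂P = μ) (hμ₂ : ∫ ω, X₂ ω ∂P = μ) (lam : ℝ) :
    ∫ ω, |(1 - lam) * (X₁ ω - μ) + lam * (X₁ ω - X₂ ω)| ∂P
      = 2 * (∫⁻ ω, ENNReal.ofReal (X₁ ω - lam * X₂ ω - (1 - lam) * μ) ∂P).toReal := by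
  have hint : Integrable (fun ω => X₁ ω - lam * X₂ ω) P := hX₁.sub (hX₂.const_mul lam)
  have hZ₀ : ∫ ω, X₁ ω - lam * X₂ ω - (1 - lam) * μ ∂P = 0 := by
    rw [integral_sub hint (integrable_const _), integral_sub hX₁ (hX₂.const_mul lam),
      integral_const_mul, hμ₁, hμ₂, integral_const, probReal_univ, one_smul]
    ring
  have hZ (ω : Ω) : (1 - lam) * (X₁ ω - μ) + lam * (X₁ ω - X₂ ω)
      = X₁ ω - lam * X₂ ω - (1 - lam) * μ := by ring
  simp_rw [hZ]
  exact integral_abs_eq_two_mul_toReal_lintegral_ofReal (hint.sub (integrable_const _)) hZ₀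

theorem ProbabilityTheory.IndepFun.lintegral_ofReal_sub_mul_sub [IsFiniteMeasure P]
    {X₁ X₂ : Ω → ℝ} (hX₁ : Measurable X₁) (hX₂ : Measurable X₂) (hind : IndepFun X₁ X₂ P)
    {lam : ℝ} (hlam : 0 < lam) (c : ℝ) :
    ∫⁻ ω, ENNReal.ofReal (X₁ ω - lam * X₂ ω - c) ∂P
      = ∫⁻ t, P.map X₁ (Ioi t) * P.map X₂ (Iio ((t - c) / lam)) := by
  rw [← lintegral_prod_ofReal_sub_mul_sub hlam,
    ← hind.map_prod_eq_prod_map_map hX₁.aemeasurable hX₂.aemeasurable,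
    lintegral_map (by fun_prop) (hX₁.prodMk hX₂)]

theorem ProbabilityTheory.HasLaw.integrable_of_integrable_id {ν : Measure ℝ} {X : Ω → ℝ}
    (hX : HasLaw X ν P) (hν : Integrable id ν) : Integrable X P :=
  (integrable_map_measure aestronglyMeasurable_id hX.aemeasurable).1 (hX.map_eq ▸ hν)

end Probability

section IncompleteGamma

theorem integrableOn_rpow_mul_exp_neg_Ioi {s x : ℝ} (hs : -1 < s) (hx : 0 ≤ x) :
    IntegrableOn (fun t => t ^ s * Real.exp (-t)) (Ioi x) := by
  have h := (Real.GammaIntegral_convergent (s := s + 1) (by linarith)).mono_set (Ioi_subset_Ioi hx)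
  simp only [add_sub_cancel_right] at h
  exact h.congr_fun (fun _ _ => mul_comm _ _) measurableSet_Ioi

theorem rpow_mul_exp_neg_nonneg_ae {s x : ℝ} (hx : 0 ≤ x) :
    0 ≤ᵐ[volume.restrict (Ioi x)] fun t => t ^ s * Real.exp (-t) := by
  filter_upwards [ae_restrict_mem measurableSet_Ioi] with t ht
  exact mul_nonneg (Real.rpow_nonneg (hx.trans ht.le) _) (Real.exp_pos _).le

variable {s x : ℝ}

theorem uGamma_nonneg (hx : 0 ≤ x) : 0 ≤ uGamma s x :=
  integral_nonneg_of_ae (rpow_mul_exp_neg_nonneg_ae hx)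

theorem uGamma_zero (hs : 0 < s) : uGamma s 0 = Real.Gamma s := by
  rw [uGamma, Real.Gamma_eq_integral hs]
  exact setIntegral_congr_fun measurableSet_Ioi fun _ _ => mul_comm _ _

theorem uGamma_nonneg_ae (hx : 0 ≤ x) : 0 ≤ᵐ[volume.restrict (Ioi x)] uGamma s := by
  filter_upwards [ae_restrict_mem measurableSet_Ioi] with t ht
  exact uGamma_nonneg (hx.trans ht.le)

theorem uGamma_le_Gamma (hs : 0 < s) (hx : 0 ≤ x) : uGamma s x ≤ Real.Gamma s := by
  rw [← uGamma_zero hs]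
  exact setIntegral_mono_set (integrableOn_rpow_mul_exp_neg_Ioi (by linarith) le_rfl)
    (rpow_mul_exp_neg_nonneg_ae le_rfl) (Ioi_subset_Ioi hx).eventuallyLE

@[fun_prop]
theorem measurable_uGamma (s : ℝ) : Measurable (uGamma s) := by
  have hf : StronglyMeasurable ({p : ℝ × ℝ | p.1 < p.2}.indicator
      fun p => p.2 ^ (s - 1) * Real.exp (-p.2)) :=
    (Measurable.stronglyMeasurable (by fun_prop)).indicator
      (measurableSet_lt measurable_fst measurable_snd)
  convert hf.integral_prod_right' (ν := volume).measurable with x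
  rw [uGamma, ← integral_indicator measurableSet_Ioi]
  rfl

theorem uGamma_add_one (hs : 0 < s) (hx : 0 ≤ x) :
    uGamma (s + 1) x = s * uGamma s x + x ^ s * Real.exp (-x) := by
  have hint₁ : IntegrableOn (fun t => t ^ s * Real.exp (-t)) (Ioi x) :=
    integrableOn_rpow_mul_exp_neg_Ioi (by linarith) hx
  have hint₂ : IntegrableOn (fun t => s * (t ^ (s - 1) * Real.exp (-t))) (Ioi x) :=
    (integrableOn_rpow_mul_exp_neg_Ioi (by linarith) hx).const_mul s
  have hderiv (t : ℝ) (ht : t ∈ Ioi x) : HasDerivAt (fun t => -(t ^ s * Real.exp (-t)))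
      (t ^ s * Real.exp (-t) - s * (t ^ (s - 1) * Real.exp (-t))) t := by
    have h := ((Real.hasDerivAt_rpow_const (p := s) (Or.inl (hx.trans_lt ht).ne')).mul
      (hasDerivAt_neg t).exp).neg
    exact h.congr_deriv (by ring)
  have hcont : ContinuousWithinAt (fun t => -(t ^ s * Real.exp (-t))) (Ici x) x :=
    ((Real.continuousAt_rpow_const x s (Or.inr hs.le)).mul
      (Real.continuous_exp.comp continuous_neg).continuousAt).neg.continuousWithinAt
  have hlim : Tendsto (fun t => -(t ^ s * Real.exp (-t))) atTop (𝓝 0) := by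
    simpa using (tendsto_rpow_mul_exp_neg_mul_atTop_nhds_zero s 1 one_pos).neg
  have hibp := integral_Ioi_of_hasDerivAt_of_tendsto hcont hderiv (hint₁.sub hint₂) hlim
  rw [integral_sub hint₁ hint₂, integral_const_mul] at hibp
  simp only [uGamma, add_sub_cancel_right]
  linarith

theorem rpow_sub_one_mul_exp_neg_mul_sub {u : ℝ} (hu : 0 < u) (x : ℝ) :
    u ^ (s - 1) * Real.exp (-u) * (u - x)
      = u ^ s * Real.exp (-u) - x * (u ^ (s - 1) * Real.exp (-u)) := by
  rw [Real.rpow_sub_one hu.ne']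
  field_simp

theorem lintegral_ofReal_uGamma_Ioi (hs : 0 < s) (hx : 0 ≤ x) :
    ∫⁻ t in Ioi x, ENNReal.ofReal (uGamma s t)
      = ∫⁻ u in Ioi x, ENNReal.ofReal (u ^ (s - 1) * Real.exp (-u) * (u - x)) := by
  set ρ := (volume.restrict (Ioi x)).withDensity
    fun u => ENNReal.ofReal (u ^ (s - 1) * Real.exp (-u))
  have hρ (t : ℝ) (ht : t ∈ Ioi x) : ρ (Ioi t) = ENNReal.ofReal (uGamma s t) := by
    have ht₀ : 0 ≤ t := hx.trans ht.le
    rw [withDensity_apply _ measurableSet_Ioi, Measure.restrict_restrict measurableSet_Ioi,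
      Ioi_inter_Ioi, sup_eq_left.2 (le_of_lt ht), uGamma,
      ofReal_integral_eq_lintegral_ofReal (integrableOn_rpow_mul_exp_neg_Ioi (by linarith) ht₀)
        (rpow_mul_exp_neg_nonneg_ae ht₀)]
  rw [← setLIntegral_congr_fun measurableSet_Ioi hρ,
    ← lintegral_ofReal_sub_eq_setLIntegral_measure_Ioi,
    lintegral_withDensity_eq_lintegral_mul _ (by fun_prop) (by fun_prop)]
  refine setLIntegral_congr_fun measurableSet_Ioi fun u hu => ?_
  exact (ENNReal.ofReal_mul (mul_nonneg (Real.rpow_nonneg (hx.trans hu.le) _)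
    (Real.exp_pos _).le)).symm

theorem integrableOn_rpow_sub_one_mul_exp_neg_mul_sub (hs : 0 < s) (hx : 0 ≤ x) :
    IntegrableOn (fun u => u ^ (s - 1) * Real.exp (-u) * (u - x)) (Ioi x) :=
  ((integrableOn_rpow_mul_exp_neg_Ioi (by linarith) hx).sub
    ((integrableOn_rpow_mul_exp_neg_Ioi (by linarith) hx).const_mul x)).congr_fun
    (fun u hu => (rpow_sub_one_mul_exp_neg_mul_sub (hx.trans_lt hu) x).symm) measurableSet_Ioi

theorem rpow_sub_one_mul_exp_neg_mul_sub_nonneg_ae (hx : 0 ≤ x) :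
    0 ≤ᵐ[volume.restrict (Ioi x)] fun u => u ^ (s - 1) * Real.exp (-u) * (u - x) := by
  filter_upwards [rpow_mul_exp_neg_nonneg_ae (s := s - 1) hx, ae_restrict_mem measurableSet_Ioi]
    with u hgu hu
  exact mul_nonneg hgu (sub_nonneg.2 (le_of_lt hu))

theorem integrableOn_uGamma_Ioi (hs : 0 < s) (hx : 0 ≤ x) : IntegrableOn (uGamma s) (Ioi x) := by
  refine ⟨(measurable_uGamma s).aestronglyMeasurable, ?_⟩
  rw [hasFiniteIntegral_iff_ofReal (uGamma_nonneg_ae hx), lintegral_ofReal_uGamma_Ioi hs hx]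
  exact (hasFiniteIntegral_iff_ofReal (rpow_sub_one_mul_exp_neg_mul_sub_nonneg_ae hx)).1
    (integrableOn_rpow_sub_one_mul_exp_neg_mul_sub hs hx).2

theorem integral_uGamma_Ioi (hs : 0 < s) (hx : 0 ≤ x) :
    ∫ t in Ioi x, uGamma s t = uGamma (s + 1) x - x * uGamma s x := by
  calc ∫ t in Ioi x, uGamma s t
      = ∫ u in Ioi x, u ^ (s - 1) * Real.exp (-u) * (u - x) := by
        rw [integral_eq_lintegral_of_nonneg_ae (uGamma_nonneg_ae hx)
            (measurable_uGamma s).aestronglyMeasurable, lintegral_ofReal_uGamma_Ioi hs hx,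
          ← integral_eq_lintegral_of_nonneg_ae (rpow_sub_one_mul_exp_neg_mul_sub_nonneg_ae hx)
            (integrableOn_rpow_sub_one_mul_exp_neg_mul_sub hs hx).1]
    _ = ∫ u in Ioi x, (u ^ s * Real.exp (-u) - x * (u ^ (s - 1) * Real.exp (-u))) :=
        setIntegral_congr_fun measurableSet_Ioi
          fun u hu => rpow_sub_one_mul_exp_neg_mul_sub (hx.trans_lt hu) x
    _ = uGamma (s + 1) x - x * uGamma s x := by
        rw [integral_sub (integrableOn_rpow_mul_exp_neg_Ioi (by linarith) hx)
          ((integrableOn_rpow_mul_exp_neg_Ioi (by linarith) hx).const_mul x), integral_const_mul]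
        simp only [uGamma, add_sub_cancel_right]

theorem uGamma_div_Gamma_mem_Icc (hs : 0 < s) (hx : 0 ≤ x) :
    uGamma s x / Real.Gamma s ∈ Icc 0 1 :=
  ⟨div_nonneg (uGamma_nonneg hx) (Real.Gamma_pos_of_pos hs).le,
    (div_le_one (Real.Gamma_pos_of_pos hs)).2 (uGamma_le_Gamma hs hx)⟩

theorem integral_uGamma_mul_one_sub (hs : 0 < s) (hx : 0 ≤ x) {lam : ℝ} (hlam : 0 ≤ lam) :
    ∫ u in Ioi x, uGamma s u / Real.Gamma s * (1 - uGamma s ((u - x) / lam) / Real.Gamma s)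
      = (uGamma (s + 1) x - x * uGamma s x) / Real.Gamma s
        - ∫ u in Ioi x, uGamma s u / Real.Gamma s * (uGamma s ((u - x) / lam) / Real.Gamma s) := by
  have hQ : IntegrableOn (fun u => uGamma s u / Real.Gamma s) (Ioi x) :=
    (integrableOn_uGamma_Ioi hs hx).div_const _
  have hQQ : IntegrableOn
      (fun u => uGamma s u / Real.Gamma s * (uGamma s ((u - x) / lam) / Real.Gamma s)) (Ioi x) := by
    refine Integrable.mul_bdd (c := 1) hQ (Measurable.aestronglyMeasurable (by fun_prop)) ?_
    filter_upwards [ae_restrict_mem measurableSet_Ioi] with u hu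
    have hQ' := uGamma_div_Gamma_mem_Icc hs (div_nonneg (sub_nonneg.2 (le_of_lt hu)) hlam)
    rw [Real.norm_of_nonneg hQ'.1]
    exact hQ'.2
  simp_rw [mul_one_sub]
  rw [integral_sub hQ hQQ, integral_div, integral_uGamma_Ioi hs hx]

end IncompleteGamma

section GammaDistribution

variable {α β : ℝ}

theorem gammaMeasure_Ioi (hα : 0 < α) (hβ : 0 < β) {a : ℝ} (ha : 0 ≤ a) :
    gammaMeasure α β (Ioi a) = ENNReal.ofReal (uGamma α (β * a) / Real.Gamma α) := by
  set g : ℝ → ℝ := fun u => u ^ (α - 1) * Real.exp (-u)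
  have hpdf (x : ℝ) (hx : x ∈ Ioi a) :
      gammaPDF α β x = ENNReal.ofReal (β / Real.Gamma α * g (β * x)) := by
    rw [gammaPDF_of_nonneg (ha.trans hx.le)]
    simp only [g, Real.mul_rpow hβ.le (ha.trans hx.le), Real.rpow_sub_one hβ.ne']
    congr 1
    field_simp
  have hint : IntegrableOn (fun x => g (β * x)) (Ioi a) :=
    (integrableOn_Ioi_comp_mul_left_iff g a hβ).2
      (integrableOn_rpow_mul_exp_neg_Ioi (by linarith) (by positivity))
  have hnonneg : 0 ≤ᵐ[volume.restrict (Ioi a)] fun x => β / Real.Gamma α * g (β * x) := by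
    filter_upwards [ae_restrict_mem measurableSet_Ioi] with x hx
    have := Real.Gamma_pos_of_pos hα
    have : 0 < x := ha.trans_lt hx
    positivity
  rw [gammaMeasure, withDensity_apply _ measurableSet_Ioi,
    setLIntegral_congr_fun measurableSet_Ioi hpdf,
    ← ofReal_integral_eq_lintegral_ofReal (hint.const_mul _) hnonneg, integral_const_mul,
    integral_comp_mul_left_Ioi g a hβ, smul_eq_mul]
  congr 1
  field_simp
  rfl

theorem gammaMeasure_Iio_of_nonpos {r : ℝ} (hr : r ≤ 0) : gammaMeasure α β (Iio r) = 0 := by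
  rw [gammaMeasure, withDensity_apply _ measurableSet_Iio]
  exact lintegral_gammaPDF_of_nonpos hr

theorem gammaMeasure_Iio (hα : 0 < α) (hβ : 0 < β) {r : ℝ} (hr : 0 ≤ r) :
    gammaMeasure α β (Iio r) = ENNReal.ofReal (1 - uGamma α (β * r) / Real.Gamma α) := by
  have := isProbabilityMeasure_gammaMeasure hα hβ
  have hatom : gammaMeasure α β {r} = 0 :=
    withDensity_absolutelyContinuous _ _ (Real.volume_singleton)
  rw [← compl_Ici, prob_compl_eq_one_sub measurableSet_Ici,
    ← measure_congr (Ioi_ae_eq_Ici' hatom), gammaMeasure_Ioi hα hβ hr,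
    ENNReal.ofReal_sub _ (uGamma_div_Gamma_mem_Icc hα (by positivity)).1, ENNReal.ofReal_one]

theorem lintegral_ofReal_gammaMeasure (hα : 0 < α) (hβ : 0 < β) :
    ∫⁻ x, ENNReal.ofReal x ∂gammaMeasure α β = ENNReal.ofReal (α / β) := by
  have := isProbabilityMeasure_gammaMeasure hα hβ
  have hint : IntegrableOn (fun t => uGamma α (β * t) / Real.Gamma α) (Ioi 0) := by
    have h := (integrableOn_Ioi_comp_mul_left_iff (uGamma α) 0 hβ).2
      (by simpa using integrableOn_uGamma_Ioi hα le_rfl)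
    exact h.div_const _
  have hnonneg : 0 ≤ᵐ[volume.restrict (Ioi 0)] fun t => uGamma α (β * t) / Real.Gamma α := by
    filter_upwards [ae_restrict_mem measurableSet_Ioi] with t ht
    exact (uGamma_div_Gamma_mem_Icc hα (mul_nonneg hβ.le ht.out.le)).1
  calc ∫⁻ x, ENNReal.ofReal x ∂gammaMeasure α β
      = ∫⁻ t in Ioi 0, gammaMeasure α β (Ioi t) := by
        simpa using lintegral_ofReal_sub_eq_setLIntegral_measure_Ioi (ν := gammaMeasure α β) 0
    _ = ∫⁻ t in Ioi 0, ENNReal.ofReal (uGamma α (β * t) / Real.Gamma α) :=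
        setLIntegral_congr_fun measurableSet_Ioi fun t ht => gammaMeasure_Ioi hα hβ (le_of_lt ht)
    _ = ENNReal.ofReal (α / β) := by
        rw [← ofReal_integral_eq_lintegral_ofReal hint hnonneg, integral_div,
          integral_comp_mul_left_Ioi (uGamma α) 0 hβ, mul_zero, integral_uGamma_Ioi hα le_rfl,
          uGamma_zero (by linarith), Real.Gamma_add_one hα.ne', zero_mul, sub_zero, smul_eq_mul]
        congr 1
        field_simp [(Real.Gamma_pos_of_pos hα).ne']

theorem gammaMeasure_ae_nonneg : ∀ᵐ x ∂gammaMeasure α β, 0 ≤ x := by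
  rw [ae_iff]
  convert gammaMeasure_Iio_of_nonpos (α := α) (β := β) le_rfl using 2
  ext x
  simp

theorem integrable_id_gammaMeasure (hα : 0 < α) (hβ : 0 < β) :
    Integrable id (gammaMeasure α β) := by
  refine ⟨aestronglyMeasurable_id, ?_⟩
  change HasFiniteIntegral (fun x => x) _
  rw [hasFiniteIntegral_iff_ofReal gammaMeasure_ae_nonneg]
  simp [lintegral_ofReal_gammaMeasure hα hβ]

theorem integral_id_gammaMeasure (hα : 0 < α) (hβ : 0 < β) :
    ∫ x, x ∂gammaMeasure α β = α / β := by
  rw [integral_eq_lintegral_of_nonneg_ae gammaMeasure_ae_nonneg aestronglyMeasurable_id,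
    lintegral_ofReal_gammaMeasure hα hβ, ENNReal.toReal_ofReal (by positivity)]

theorem toReal_lintegral_gammaMeasure_Ioi_mul_Iio (hα : 0 < α) (hβ : 0 < β) {c lam : ℝ}
    (hc : 0 ≤ c) (hlam : 0 ≤ lam) :
    (∫⁻ t, gammaMeasure α β (Ioi t) * gammaMeasure α β (Iio ((t - c) / lam))).toReal
      = β⁻¹ * ∫ u in Ioi (β * c),
          uGamma α u / Real.Gamma α * (1 - uGamma α ((u - β * c) / lam) / Real.Gamma α) := by
  set h : ℝ → ℝ := fun u =>
    uGamma α u / Real.Gamma α * (1 - uGamma α ((u - β * c) / lam) / Real.Gamma α)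
  have hsupp : (fun t => gammaMeasure α β (Ioi t) * gammaMeasure α β (Iio ((t - c) / lam))).support
      ⊆ Ioi c := by
    intro t ht
    by_contra htc
    rw [mem_Ioi, not_lt] at htc
    apply ht
    dsimp only
    rw [gammaMeasure_Iio_of_nonpos (div_nonpos_of_nonpos_of_nonneg (by linarith) hlam), mul_zero]
  have hofReal (t : ℝ) (ht : t ∈ Ioi c) : gammaMeasure α β (Ioi t)
      * gammaMeasure α β (Iio ((t - c) / lam)) = ENNReal.ofReal (h (β * t)) := by
    have ht₀ : 0 ≤ t := hc.trans (le_of_lt ht)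
    have hscale : β * ((t - c) / lam) = (β * t - β * c) / lam := by ring
    rw [gammaMeasure_Ioi hα hβ ht₀,
      gammaMeasure_Iio hα hβ (div_nonneg (sub_nonneg.2 (le_of_lt ht)) hlam),
      ← ENNReal.ofReal_mul (uGamma_div_Gamma_mem_Icc hα (mul_nonneg hβ.le ht₀)).1, hscale]
  have hnonneg : 0 ≤ᵐ[volume.restrict (Ioi c)] fun t => h (β * t) := by
    filter_upwards [ae_restrict_mem measurableSet_Ioi] with t ht
    have hQ := uGamma_div_Gamma_mem_Icc hα (mul_nonneg hβ.le (hc.trans ht.out.le))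
    have hQ' := uGamma_div_Gamma_mem_Icc hα
      (div_nonneg (sub_nonneg.2 (mul_le_mul_of_nonneg_left ht.out.le hβ.le)) hlam)
    exact mul_nonneg hQ.1 (sub_nonneg.2 hQ'.2)
  rw [← setLIntegral_eq_of_support_subset hsupp, setLIntegral_congr_fun measurableSet_Ioi hofReal,
    ← integral_eq_lintegral_of_nonneg_ae hnonneg (Measurable.aestronglyMeasurable (by fun_prop)),
    integral_comp_mul_left_Ioi h c hβ, smul_eq_mul]

end GammaDistribution

/-- Proposition 2.2. If `X ~ Gamma(α, β)` (shape `α > 0`, rate `β > 0`),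
`X₁, X₂` are independent copies of `X`, and `λ ∈ (0,1]`, then
`I_λ = (1-λ)^α α^{α-1} e^{-(1-λ)α} / Γ(α) + λ Γ(α,(1-λ)α)/Γ(α)
     - (1/α) ∫_{(1-λ)α}^∞ [Γ(α,t)/Γ(α)] [Γ(α,(t-(1-λ)α)/λ)/Γ(α)] dt`. -/
theorem index_gamma_closed_form
    {Ω : Type*} {mΩ : MeasurableSpace Ω} (P : Measure Ω) [IsProbabilityMeasure P]
    (α β : ℝ) (hα : 0 < α) (hβ : 0 < β)
    (X₁ X₂ : Ω → ℝ) (hX₁m : Measurable X₁) (hX₂m : Measurable X₂)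
    (hd1 : Measure.map X₁ P = gammaMeasure α β)
    (hd2 : Measure.map X₂ P = gammaMeasure α β)
    (hindep : IndepFun X₁ X₂ P)
    (μ : ℝ) (hμ : μ = α / β)
    (lam : ℝ) (hlam : lam ∈ Ioc (0 : ℝ) 1) :
    (1 / (2 * μ)) * (∫ ω, |(1 - lam) * (X₁ ω - μ) + lam * (X₁ ω - X₂ ω)| ∂P)
      = (1 - lam) ^ α * α ^ (α - 1) * Real.exp (-((1 - lam) * α)) / Real.Gamma α
        + lam * (uGamma α ((1 - lam) * α) / Real.Gamma α)
        - (1 / α) * ∫ t in Ioi ((1 - lam) * α),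
            (uGamma α t / Real.Gamma α)
              * (uGamma α ((t - (1 - lam) * α) / lam) / Real.Gamma α) := by
  obtain ⟨hlam₀, hlam₁⟩ := hlam
  have hlaw₁ : HasLaw X₁ (gammaMeasure α β) P := ⟨hX₁m.aemeasurable, hd1⟩
  have hlaw₂ : HasLaw X₂ (gammaMeasure α β) P := ⟨hX₂m.aemeasurable, hd2⟩
  have hmean : ∫ x, x ∂gammaMeasure α β = μ := by rw [integral_id_gammaMeasure hα hβ, hμ]
  have hc : 0 ≤ (1 - lam) * μ := mul_nonneg (by linarith) (hμ ▸ div_nonneg hα.le hβ.le)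
  have hx₀ : 0 ≤ (1 - lam) * α := mul_nonneg (by linarith) hα.le
  have hβc : β * ((1 - lam) * μ) = (1 - lam) * α := by rw [hμ]; field_simp
  rw [integral_abs_index_eq_two_mul_toReal_lintegral_ofReal
      (hlaw₁.integrable_of_integrable_id (integrable_id_gammaMeasure hα hβ))
      (hlaw₂.integrable_of_integrable_id (integrable_id_gammaMeasure hα hβ))
      (hlaw₁.integral_eq.trans hmean) (hlaw₂.integral_eq.trans hmean),
    hindep.lintegral_ofReal_sub_mul_sub hX₁m hX₂m hlam₀, hd1, hd2,
    toReal_lintegral_gammaMeasure_Ioi_mul_Iio hα hβ hc hlam₀.le, hβc,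
    integral_uGamma_mul_one_sub hα hx₀ hlam₀.le, uGamma_add_one hα hx₀,
    Real.mul_rpow (by linarith) hα.le, Real.rpow_sub_one hα.ne' α, hμ]
  field_simp
  ring
end

section
/- Let X ~ Gamma(α, β) with shape α > 0 and rate β > 0. Then the Hoover index of X equals H = (1/(2μ)) E|X − μ| = α^{α−1} exp{−α} / Γ(α), where μ = α/β = E[X]. -/
open MeasureTheory ProbabilityTheory Set
open Real Filter Topology

/-!
If `f` is the `Gamma(α, β)` density and `μ = α / β`, then `G x = x f(x) / β` satisfies
`G' = (μ - x) f` on `(0, ∞)`, with `G 0 = 0` and `G → 0` at infinity. Hence both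
`∫₀^μ (μ - x) f` and `∫_μ^∞ (x - μ) f` equal `G μ`, so `E|X - μ| = 2 G μ = 2 μ f(μ) / β`
and the Hoover index is `f(μ) / β = α^(α-1) e^(-α) / Γ(α)`.
-/

namespace ProbabilityTheory

variable {α β x : ℝ}

lemma gammaPDFReal_of_nonneg (hx : 0 ≤ x) :
    gammaPDFReal α β x = β ^ α / Gamma α * x ^ (α - 1) * exp (-(β * x)) := by
  simp only [gammaPDFReal, if_pos hx]

lemma gammaPDFReal_of_neg (hx : x < 0) : gammaPDFReal α β x = 0 := by
  simp only [gammaPDFReal, if_neg (not_le.mpr hx)]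

lemma integral_gammaMeasure (hα : 0 < α) (hβ : 0 < β) (g : ℝ → ℝ) :
    ∫ x, g x ∂gammaMeasure α β = ∫ x in Ici 0, gammaPDFReal α β x * g x := by
  rw [gammaMeasure, integral_withDensity_eq_integral_toReal_smul (f := gammaPDF α β)
    (measurable_gammaPDFReal α β).ennreal_ofReal (ae_of_all _ fun _ => ENNReal.ofReal_lt_top)]
  simp only [gammaPDF, ENNReal.toReal_ofReal (gammaPDFReal_nonneg hα hβ _), smul_eq_mul]
  refine (setIntegral_eq_integral_of_forall_compl_eq_zero fun x hx => ?_).symm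
  rw [gammaPDFReal_of_neg (not_le.mp hx), zero_mul]

/-- The Stein kernel `x / β` of the gamma law times its density, for `x ≥ 0`. -/
noncomputable def gammaSteinPrimitive (α β x : ℝ) : ℝ :=
  β ^ (α - 1) / Gamma α * (x ^ α * exp (-(β * x)))

lemma hasDerivAt_gammaSteinPrimitive (hβ : β ≠ 0) (hx : 0 < x) :
    HasDerivAt (gammaSteinPrimitive α β) ((α / β - x) * gammaPDFReal α β x) x := by
  have hpow : HasDerivAt (· ^ α) (α * x ^ (α - 1)) x := hasDerivAt_rpow_const (Or.inl hx.ne')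
  have hexp : HasDerivAt (fun y => exp (-(β * y))) (exp (-(β * x)) * -β) x := by
    simpa using ((hasDerivAt_id x).const_mul β).neg.exp
  refine ((hpow.mul hexp).const_mul _).congr_deriv ?_
  rw [gammaPDFReal_of_nonneg hx.le, rpow_sub_one hx.ne', rpow_sub_one hβ]
  field_simp
  ring

lemma continuous_gammaSteinPrimitive (hα : 0 ≤ α) : Continuous (gammaSteinPrimitive α β) :=
  continuous_const.mul ((continuous_rpow_const hα).mul (by fun_prop))

lemma tendsto_gammaSteinPrimitive_atTop (hβ : 0 < β) :
    Tendsto (gammaSteinPrimitive α β) atTop (𝓝 0) := by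
  have h := (tendsto_rpow_mul_exp_neg_mul_atTop_nhds_zero α β hβ).const_mul (β ^ (α - 1) / Gamma α)
  simp only [neg_mul, mul_zero] at h
  exact h

lemma gammaSteinPrimitive_zero (hα : α ≠ 0) : gammaSteinPrimitive α β 0 = 0 := by
  simp [gammaSteinPrimitive, zero_rpow hα]

lemma hasDerivAt_neg_gammaSteinPrimitive (hβ : β ≠ 0) (hx : 0 < x) :
    HasDerivAt (fun y => -gammaSteinPrimitive α β y) ((x - α / β) * gammaPDFReal α β x) x := by
  refine (hasDerivAt_gammaSteinPrimitive hβ hx).neg.congr_deriv ?_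
  ring

lemma integrableOn_Ioi_sub_mul_gammaPDFReal (hα : 0 < α) (hβ : 0 < β) :
    IntegrableOn (fun x => (x - α / β) * gammaPDFReal α β x) (Ioi (α / β)) :=
  integrableOn_Ioi_deriv_of_nonneg (continuous_gammaSteinPrimitive hα.le).neg.continuousWithinAt
    (fun _ hx => hasDerivAt_neg_gammaSteinPrimitive hβ.ne' ((div_pos hα hβ).trans hx))
    (fun x hx => mul_nonneg (sub_nonneg.mpr (le_of_lt hx)) (gammaPDFReal_nonneg hα hβ x))
    (tendsto_gammaSteinPrimitive_atTop hβ).neg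

lemma integral_Ioi_sub_mul_gammaPDFReal (hα : 0 < α) (hβ : 0 < β) :
    ∫ x in Ioi (α / β), (x - α / β) * gammaPDFReal α β x = gammaSteinPrimitive α β (α / β) := by
  simpa using integral_Ioi_of_hasDerivAt_of_tendsto
    (continuous_gammaSteinPrimitive hα.le).neg.continuousWithinAt
    (fun _ hx => hasDerivAt_neg_gammaSteinPrimitive hβ.ne' ((div_pos hα hβ).trans hx))
    (integrableOn_Ioi_sub_mul_gammaPDFReal hα hβ) (tendsto_gammaSteinPrimitive_atTop hβ).neg

lemma integrableOn_Ioc_sub_mul_gammaPDFReal (hα : 0 < α) (hβ : 0 < β) :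
    IntegrableOn (fun x => (α / β - x) * gammaPDFReal α β x) (Ioc 0 (α / β)) :=
  intervalIntegral.integrableOn_deriv_of_nonneg
    (continuous_gammaSteinPrimitive hα.le).continuousOn
    (fun _ hx => hasDerivAt_gammaSteinPrimitive hβ.ne' hx.1)
    (fun x hx => mul_nonneg (sub_nonneg.mpr hx.2.le) (gammaPDFReal_nonneg hα hβ x))

lemma integral_Ioc_sub_mul_gammaPDFReal (hα : 0 < α) (hβ : 0 < β) :
    ∫ x in Ioc 0 (α / β), (α / β - x) * gammaPDFReal α β x = gammaSteinPrimitive α β (α / β) := by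
  have hμ : 0 ≤ α / β := (div_pos hα hβ).le
  rw [← intervalIntegral.integral_of_le hμ, intervalIntegral.integral_eq_sub_of_hasDerivAt_of_le hμ
    (continuous_gammaSteinPrimitive hα.le).continuousOn
    (fun _ hx => hasDerivAt_gammaSteinPrimitive hβ.ne' hx.1)
    ((intervalIntegrable_iff_integrableOn_Ioc_of_le hμ).mpr
      (integrableOn_Ioc_sub_mul_gammaPDFReal hα hβ)),
    gammaSteinPrimitive_zero hα.ne', sub_zero]

lemma integral_abs_sub_mean_gammaMeasure (hα : 0 < α) (hβ : 0 < β) :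
    ∫ x, |x - α / β| ∂gammaMeasure α β = 2 * gammaSteinPrimitive α β (α / β) := by
  have hμ : 0 ≤ α / β := (div_pos hα hβ).le
  have hbelow : EqOn (fun x => gammaPDFReal α β x * |x - α / β|)
      (fun x => (α / β - x) * gammaPDFReal α β x) (Ioc 0 (α / β)) := fun x hx => by
    dsimp only
    rw [abs_of_nonpos (sub_nonpos.mpr hx.2), neg_sub, mul_comm]
  have habove : EqOn (fun x => gammaPDFReal α β x * |x - α / β|)
      (fun x => (x - α / β) * gammaPDFReal α β x) (Ioi (α / β)) := fun x hx => by
    dsimp only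
    rw [abs_of_pos (sub_pos.mpr hx), mul_comm]
  rw [integral_gammaMeasure hα hβ, integral_Ici_eq_integral_Ioi, ← Ioc_union_Ioi_eq_Ioi hμ,
    setIntegral_union Ioc_disjoint_Ioi_same measurableSet_Ioi
      ((integrableOn_Ioc_sub_mul_gammaPDFReal hα hβ).congr_fun hbelow.symm measurableSet_Ioc)
      ((integrableOn_Ioi_sub_mul_gammaPDFReal hα hβ).congr_fun habove.symm measurableSet_Ioi),
    setIntegral_congr_fun measurableSet_Ioc hbelow, setIntegral_congr_fun measurableSet_Ioi habove,
    integral_Ioc_sub_mul_gammaPDFReal hα hβ, integral_Ioi_sub_mul_gammaPDFReal hα hβ, two_mul]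

lemma gammaSteinPrimitive_mean (hα : 0 < α) (hβ : 0 < β) :
    gammaSteinPrimitive α β (α / β) = α / β * (α ^ (α - 1) * exp (-α) / Gamma α) := by
  have hβμ : β * (α / β) = α := by field_simp
  rw [gammaSteinPrimitive, div_rpow hα.le hβ.le, hβμ, rpow_sub_one hα.ne', rpow_sub_one hβ.ne']
  field_simp

end ProbabilityTheory

theorem hoover_gamma_closed_form_general
    {Ω : Type*} {mΩ : MeasurableSpace Ω} (P : Measure Ω)
    (α β : ℝ) (hα : 0 < α) (hβ : 0 < β)
    (X : Ω → ℝ) (hXm : Measurable X)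
    (hd : Measure.map X P = gammaMeasure α β)
    (μ : ℝ) (hμ : μ = α / β) :
    (1 / (2 * μ)) * (∫ ω, |X ω - μ| ∂P)
      = α ^ (α - 1) * Real.exp (-α) / Real.Gamma α := by
  have hpushforward : ∫ ω, |X ω - μ| ∂P = ∫ x, |x - μ| ∂gammaMeasure α β := by
    rw [← hd, integral_map hXm.aemeasurable (by fun_prop)]
  rw [hpushforward, hμ, integral_abs_sub_mean_gammaMeasure hα hβ, gammaSteinPrimitive_mean hα hβ]
  field_simp

/-- Remark 2.1 / Hoover index of a gamma distribution. If `X ~ Gamma(α, β)`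
(shape `α > 0`, rate `β > 0`) and `μ = α/β = E[X]`, then the Hoover index satisfies
`H = (1/(2μ)) E|X - μ| = α^{α-1} e^{-α} / Γ(α)`. -/
theorem hoover_gamma_closed_form
    {Ω : Type*} {mΩ : MeasurableSpace Ω} (P : Measure Ω) [IsProbabilityMeasure P]
    (α β : ℝ) (hα : 0 < α) (hβ : 0 < β)
    (X : Ω → ℝ) (hXm : Measurable X)
    (hd : Measure.map X P = gammaMeasure α β)
    (μ : ℝ) (hμ : μ = α / β) :
    (1 / (2 * μ)) * (∫ ω, |X ω - μ| ∂P)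
      = α ^ (α - 1) * Real.exp (-α) / Real.Gamma α :=
  hoover_gamma_closed_form_general (mΩ := mΩ) P α β hα hβ X hXm hd μ hμ
end

section
/- Let X be a non-negative random variable with finite mean μ = E[X] > 0 and let λ ∈ [0,1]. Then 0 ≤ I_λ ≤ G ≤ 1, where G is the Gini coefficient of X. Moreover, if X = c almost surely for some constant c > 0, then I_λ = 0. -/
open MeasureTheory ProbabilityTheory Set

/-!
Jensen's inequality for `|x - ·|`, applied for each value `x` of `X₁` and integrated against the
law of the independent copy `X₂`, gives `E|X₁ - μ| ≤ E|X₁ - X₂|`. The integrand of `I_λ` is at most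
`(1 - λ)|X₁ - μ| + λ|X₁ - X₂|`, so `I_λ ≤ G`. Non-negativity gives `|X₁ - X₂| ≤ X₁ + X₂`, hence
`E|X₁ - X₂| ≤ 2μ` and `G ≤ 1`. A constant `X` makes the integrand of `I_λ` vanish almost surely.
-/

section

variable {Ω : Type*} {mΩ : MeasurableSpace Ω} {P : Measure Ω}

theorem abs_sub_integral_le_integral_abs_sub [IsProbabilityMeasure P] {Y : Ω → ℝ}
    (hY : Integrable Y P) (x : ℝ) : |x - ∫ ω, Y ω ∂P| ≤ ∫ ω, |x - Y ω| ∂P := by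
  have hx : x - ∫ ω, Y ω ∂P = ∫ ω, (x - Y ω) ∂P := by
    rw [integral_sub (integrable_const x) hY, integral_const, probReal_univ, one_smul]
  rw [hx]
  exact abs_integral_le_integral_abs

theorem ProbabilityTheory.IndepFun.integral_abs_sub_integral_le [IsProbabilityMeasure P]
    {X Y : Ω → ℝ} (hXY : IndepFun X Y P) (hX : Integrable X P) (hY : Integrable Y P) :
    ∫ ω, |X ω - ∫ ω', Y ω' ∂P| ∂P ≤ ∫ ω, |X ω - Y ω| ∂P := by
  have hlaw : P.map (fun ω => (X ω, Y ω)) = (P.map X).prod (P.map Y) :=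
    hXY.map_prod_eq_prod_map_map hX.aemeasurable hY.aemeasurable
  have hpair : AEMeasurable (fun ω => (X ω, Y ω)) P := hX.aemeasurable.prodMk hY.aemeasurable
  have hdist : Measurable (fun p : ℝ × ℝ => |p.1 - p.2|) := (measurable_fst.sub measurable_snd).abs
  have hdist_int : Integrable (fun p : ℝ × ℝ => |p.1 - p.2|) ((P.map X).prod (P.map Y)) := by
    rw [← hlaw, integrable_map_measure hdist.aestronglyMeasurable hpair]
    exact (hX.sub hY).abs
  have : IsProbabilityMeasure (P.map Y) := Measure.isProbabilityMeasure_map hY.aemeasurable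
  have hY' : Integrable (fun y => y) (P.map Y) :=
    (integrable_map_measure aestronglyMeasurable_id hY.aemeasurable).mpr hY
  calc ∫ ω, |X ω - ∫ ω', Y ω' ∂P| ∂P = ∫ x, |x - ∫ y, y ∂(P.map Y)| ∂(P.map X) := by
        rw [integral_map (f := fun y => y) hY.aemeasurable aestronglyMeasurable_id,
          integral_map hX.aemeasurable (by fun_prop)]
    _ ≤ ∫ x, ∫ y, |x - y| ∂(P.map Y) ∂(P.map X) :=
        integral_mono ((integrable_map_measure (by fun_prop) hX.aemeasurable).mpr
            (hX.sub (integrable_const _)).abs)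
          hdist_int.integral_prod_left (abs_sub_integral_le_integral_abs_sub hY')
    _ = ∫ ω, |X ω - Y ω| ∂P := by
        rw [integral_integral hdist_int, ← hlaw, integral_map hpair hdist.aestronglyMeasurable]

theorem integral_abs_sub_le_integral_add {X Y : Ω → ℝ} (hX : Integrable X P)
    (hY : Integrable Y P) (hX0 : ∀ᵐ ω ∂P, 0 ≤ X ω) (hY0 : ∀ᵐ ω ∂P, 0 ≤ Y ω) :
    ∫ ω, |X ω - Y ω| ∂P ≤ ∫ ω, X ω ∂P + ∫ ω, Y ω ∂P := by
  rw [← integral_add hX hY]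
  refine integral_mono_ae (hX.sub hY).abs (hX.add hY) ?_
  filter_upwards [hX0, hY0] with ω hXω hYω
  exact abs_sub_le_iff.mpr ⟨by linarith, by linarith⟩

theorem integral_abs_convexComb_le {U V : Ω → ℝ} (hU : Integrable U P) (hV : Integrable V P)
    (hUV : ∫ ω, |U ω| ∂P ≤ ∫ ω, |V ω| ∂P) {t : ℝ} (ht : t ∈ Icc (0 : ℝ) 1) :
    ∫ ω, |(1 - t) * U ω + t * V ω| ∂P ≤ ∫ ω, |V ω| ∂P := by
  obtain ⟨ht0, ht1⟩ := ht
  have hpt : ∀ ω, |(1 - t) * U ω + t * V ω| ≤ (1 - t) * |U ω| + t * |V ω| := fun ω => by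
    simpa only [abs_mul, abs_of_nonneg ht0, abs_of_nonneg (sub_nonneg.mpr ht1)]
      using abs_add_le ((1 - t) * U ω) (t * V ω)
  calc ∫ ω, |(1 - t) * U ω + t * V ω| ∂P
      ≤ ∫ ω, ((1 - t) * |U ω| + t * |V ω|) ∂P :=
        integral_mono ((hU.const_mul _).add (hV.const_mul _)).abs
          ((hU.abs.const_mul _).add (hV.abs.const_mul _)) hpt
    _ = (1 - t) * ∫ ω, |U ω| ∂P + t * ∫ ω, |V ω| ∂P := by
        rw [integral_add (hU.abs.const_mul _) (hV.abs.const_mul _), integral_const_mul,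
          integral_const_mul]
    _ ≤ ∫ ω, |V ω| ∂P := by nlinarith

end

theorem index_bounds_and_degenerate_general
    {Ω : Type*} {mΩ : MeasurableSpace Ω} (P : Measure Ω) [IsProbabilityMeasure P]
    (X X₁ X₂ : Ω → ℝ)
    (hXnn : ∀ ω, 0 ≤ X ω)
    (hint : Integrable X P)
    (hid1 : IdentDistrib X₁ X P P) (hid2 : IdentDistrib X₂ X P P)
    (hindep : IndepFun X₁ X₂ P)
    (μ : ℝ) (hμ : μ = ∫ ω, X ω ∂P)
    (lam : ℝ) (hlam : lam ∈ Icc (0 : ℝ) 1) :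
    0 ≤ (1 / (2 * μ)) * (∫ ω, |(1 - lam) * (X₁ ω - μ) + lam * (X₁ ω - X₂ ω)| ∂P)
    ∧ (1 / (2 * μ)) * (∫ ω, |(1 - lam) * (X₁ ω - μ) + lam * (X₁ ω - X₂ ω)| ∂P)
        ≤ (1 / (2 * μ)) * (∫ ω, |X₁ ω - X₂ ω| ∂P)
    ∧ (1 / (2 * μ)) * (∫ ω, |X₁ ω - X₂ ω| ∂P) ≤ 1
    ∧ ∀ c : ℝ, 0 < c → (∀ᵐ ω ∂P, X ω = c) →
        (1 / (2 * μ)) * (∫ ω, |(1 - lam) * (X₁ ω - μ) + lam * (X₁ ω - X₂ ω)| ∂P) = 0 := by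
  have hint₁ : Integrable X₁ P := hid1.integrable_iff.mpr hint
  have hint₂ : Integrable X₂ P := hid2.integrable_iff.mpr hint
  have hμ₁ : ∫ ω, X₁ ω ∂P = μ := hid1.integral_eq.trans hμ.symm
  have hμ₂ : ∫ ω, X₂ ω ∂P = μ := hid2.integral_eq.trans hμ.symm
  have hμ_nonneg : 0 ≤ μ := hμ ▸ integral_nonneg hXnn
  have hI_le_G : ∫ ω, |(1 - lam) * (X₁ ω - μ) + lam * (X₁ ω - X₂ ω)| ∂P
      ≤ ∫ ω, |X₁ ω - X₂ ω| ∂P := by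
    refine integral_abs_convexComb_le (U := fun ω => X₁ ω - μ) (V := fun ω => X₁ ω - X₂ ω)
      (hint₁.sub (integrable_const μ)) (hint₁.sub hint₂) ?_ hlam
    simpa only [hμ₂] using hindep.integral_abs_sub_integral_le hint₁ hint₂
  have hG_le : ∫ ω, |X₁ ω - X₂ ω| ∂P ≤ 2 * μ := by
    have hnn : ∀ᵐ ω ∂P, 0 ≤ X ω := ae_of_all P hXnn
    have h₁nn : ∀ᵐ ω ∂P, 0 ≤ X₁ ω := hid1.symm.ae_snd measurableSet_Ici hnn
    have h₂nn : ∀ᵐ ω ∂P, 0 ≤ X₂ ω := hid2.symm.ae_snd measurableSet_Ici hnn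
    linarith [integral_abs_sub_le_integral_add hint₁ hint₂ h₁nn h₂nn]
  refine ⟨by positivity, mul_le_mul_of_nonneg_left hI_le_G (by positivity), ?_, ?_⟩
  · rw [one_div_mul_eq_div]
    exact div_le_one_of_le₀ hG_le (by positivity)
  · intro c _ hXc
    have h₁c : ∀ᵐ ω ∂P, X₁ ω = c := hid1.symm.ae_snd (measurableSet_singleton c) hXc
    have h₂c : ∀ᵐ ω ∂P, X₂ ω = c := hid2.symm.ae_snd (measurableSet_singleton c) hXc
    have hμc : μ = c := by rw [← hμ₁, integral_congr_ae h₁c, integral_const]; simp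
    have hzero : ∀ᵐ ω ∂P, |(1 - lam) * (X₁ ω - μ) + lam * (X₁ ω - X₂ ω)| = 0 := by
      filter_upwards [h₁c, h₂c] with ω h₁ h₂
      simp [h₁, h₂, hμc]
    rw [integral_congr_ae hzero, integral_zero, mul_zero]

/-- boundedness. For a non-negative random variable `X` with finite mean
`μ = E[X] > 0`, independent copies `X₁, X₂` of `X`, and `λ ∈ [0,1]`, one has
`0 ≤ I_λ ≤ G ≤ 1`, where `G = (1/(2μ)) E|X₁-X₂|` is the Gini coefficient. Moreover, if
`X = c` almost surely for some constant `c > 0`, then `I_λ = 0`. -/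
theorem index_bounds_and_degenerate
    {Ω : Type*} {mΩ : MeasurableSpace Ω} (P : Measure Ω) [IsProbabilityMeasure P]
    (X X₁ X₂ : Ω → ℝ)
    (hXm : Measurable X) (hX₁m : Measurable X₁) (hX₂m : Measurable X₂)
    (hXnn : ∀ ω, 0 ≤ X ω)
    (hint : Integrable X P)
    (hid1 : IdentDistrib X₁ X P P) (hid2 : IdentDistrib X₂ X P P)
    (hindep : IndepFun X₁ X₂ P)
    (μ : ℝ) (hμ : μ = ∫ ω, X ω ∂P) (hμpos : 0 < μ)
    (lam : ℝ) (hlam : lam ∈ Icc (0 : ℝ) 1) :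
    0 ≤ (1 / (2 * μ)) * (∫ ω, |(1 - lam) * (X₁ ω - μ) + lam * (X₁ ω - X₂ ω)| ∂P)
    ∧ (1 / (2 * μ)) * (∫ ω, |(1 - lam) * (X₁ ω - μ) + lam * (X₁ ω - X₂ ω)| ∂P)
        ≤ (1 / (2 * μ)) * (∫ ω, |X₁ ω - X₂ ω| ∂P)
    ∧ (1 / (2 * μ)) * (∫ ω, |X₁ ω - X₂ ω| ∂P) ≤ 1
    ∧ ∀ c : ℝ, 0 < c → (∀ᵐ ω ∂P, X ω = c) →
        (1 / (2 * μ)) * (∫ ω, |(1 - lam) * (X₁ ω - μ) + lam * (X₁ ω - X₂ ω)| ∂P) = 0 :=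
  index_bounds_and_degenerate_general (mΩ := mΩ) P X X₁ X₂ hXnn hint hid1 hid2 hindep μ hμ lam hlam
end
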